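/- arXiv:2205.12043 — 7 statements merged into one kernel-verified Lean document; each statement's English description precedes it below -/
import Mathlib

section
/- For reals 0 < 𝕊_l ≤ 𝕊_u and P_t ≥ 0, the function UIL^L(P_t) := (2√(P_t) − P_t/√(𝕊_u) − √(𝕊_u))·1_{𝕊_l ≤ P_t ≤ 𝕊_u} + ((1/√(𝕊_l) − 1/√(𝕊_u))·P_t − √(𝕊_u) + √(𝕊_l))·1_{P_t ≤ 𝕊_l} equals 2(√(𝕊_l) − √(P_t))⁺ − 2(√(𝕊_u) − √(P_t))⁺ − (1/√(𝕊_l))(𝕊_l − P_t)⁺ + (1/√(𝕊_u))(𝕊_u − P_t)⁺. -/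
theorem UILL_put_representation
    (Sl Su Pt : ℝ) (hSl : 0 < Sl) (hlu : Sl ≤ Su) (hPt : 0 ≤ Pt) :
    (if Sl ≤ Pt ∧ Pt ≤ Su then
        2 * Real.sqrt Pt - Pt / Real.sqrt Su - Real.sqrt Su
      else if Pt ≤ Sl then
        (1 / Real.sqrt Sl - 1 / Real.sqrt Su) * Pt - Real.sqrt Su + Real.sqrt Sl
      else 0)
    = 2 * max (Real.sqrt Sl - Real.sqrt Pt) 0
      - 2 * max (Real.sqrt Su - Real.sqrt Pt) 0
      - (1 / Real.sqrt Sl) * max (Sl - Pt) 0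
      + (1 / Real.sqrt Su) * max (Su - Pt) 0 := by
  have hSu : 0 < Su := lt_of_lt_of_le hSl hlu
  have hsl : 0 < Real.sqrt Sl := Real.sqrt_pos.mpr hSl
  have hsu : 0 < Real.sqrt Su := Real.sqrt_pos.mpr hSu
  have hml : Real.sqrt Sl * Real.sqrt Sl = Sl := Real.mul_self_sqrt hSl.le
  have hmu : Real.sqrt Su * Real.sqrt Su = Su := Real.mul_self_sqrt hSu.le
  by_cases h1 : Sl ≤ Pt ∧ Pt ≤ Su
  · obtain ⟨ha, hb⟩ := h1
    rw [if_pos ⟨ha, hb⟩,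
      max_eq_right (sub_nonpos.mpr (Real.sqrt_le_sqrt ha)),
      max_eq_left (sub_nonneg.mpr (Real.sqrt_le_sqrt hb)),
      max_eq_right (sub_nonpos.mpr ha),
      max_eq_left (sub_nonneg.mpr hb)]
    field_simp
    nlinarith [hmu]
  · rw [if_neg h1]
    by_cases h2 : Pt ≤ Sl
    · have h2' : Pt ≤ Su := le_trans h2 hlu
      rw [if_pos h2,
        max_eq_left (sub_nonneg.mpr (Real.sqrt_le_sqrt h2)),
        max_eq_left (sub_nonneg.mpr (Real.sqrt_le_sqrt h2')),
        max_eq_left (sub_nonneg.mpr h2),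
        max_eq_left (sub_nonneg.mpr h2')]
      field_simp
      nlinarith [hml, hmu, mul_pos hsl hsu]
    · have h3 : Su < Pt := by
        by_contra h
        exact h1 ⟨le_of_not_ge h2, le_of_not_gt h⟩
      rw [if_neg h2,
        max_eq_right (sub_nonpos.mpr (Real.sqrt_le_sqrt (le_trans hlu h3.le))),
        max_eq_right (sub_nonpos.mpr (Real.sqrt_le_sqrt h3.le)),
        max_eq_right (sub_nonpos.mpr (le_trans hlu h3.le)),
        max_eq_right (sub_nonpos.mpr h3.le)]
      ring
end

section
/- For any positive reals x and K̂, (√x − √K̂)·1_{x ≥ K̂} = (1/2)·K̂^(−1/2)·(x − K̂)⁺ − (1/4)·∫_{K̂}^{∞} K^(−3/2)·(x − K)⁺ dK. -/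
open MeasureTheory

theorem sqrt_call_static_replication
    (x Khat : ℝ) (hx : 0 < x) (hK : 0 < Khat) :
    (if Khat ≤ x then Real.sqrt x - Real.sqrt Khat else 0)
    = (1 / 2) * Khat ^ (-(1 : ℝ) / 2) * max (x - Khat) 0
      - (1 / 4) * ∫ K in Set.Ioi Khat, K ^ (-(3 : ℝ) / 2) * max (x - K) 0 := by
  rcases le_or_gt x Khat with hxK | hxK
  · have h0 : Set.EqOn (fun K : ℝ => K ^ (-(3 : ℝ) / 2) * max (x - K) 0)
        (fun _ => (0:ℝ)) (Set.Ioi Khat) := by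
      intro K hK'
      have : x - K ≤ 0 := by simp only [Set.mem_Ioi] at hK'; linarith
      simp [max_eq_right this]
    rw [setIntegral_congr_fun measurableSet_Ioi h0]
    have hmax : max (x - Khat) 0 = 0 := max_eq_right (by linarith)
    split_ifs with h
    · have : x = Khat := le_antisymm hxK h
      simp [this, hmax]
    · simp [hmax]
  · have hx' : Khat ≤ x := hxK.le
    rw [if_pos hx']
    have hmax : max (x - Khat) 0 = x - Khat := max_eq_left (by linarith)
    rw [hmax]
    have hind : Set.EqOn (fun K : ℝ => K ^ (-(3 : ℝ) / 2) * max (x - K) 0)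
        ((Set.Ioc Khat x).indicator (fun K => K ^ (-(3 : ℝ) / 2) * (x - K)))
        (Set.Ioi Khat) := by
      intro K hK'
      by_cases hKx : K ≤ x
      · rw [Set.indicator_of_mem (Set.mem_Ioc.mpr ⟨Set.mem_Ioi.mp hK', hKx⟩)]
        simp [max_eq_left (by linarith : (0:ℝ) ≤ x - K)]
      · rw [Set.indicator_of_notMem (by simp [hKx] : K ∉ Set.Ioc Khat x)]
        push_neg at hKx
        simp [max_eq_right (by linarith : x - K ≤ 0)]
    rw [setIntegral_congr_fun measurableSet_Ioi hind,
      setIntegral_indicator measurableSet_Ioc,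
      Set.inter_eq_self_of_subset_right Set.Ioc_subset_Ioi_self,
      ← intervalIntegral.integral_of_le hx']
    have hcongr : ∀ K ∈ Set.uIcc Khat x,
        K ^ (-(3 : ℝ) / 2) * (x - K) = x * K ^ (-(3:ℝ)/2) - K ^ (-(1:ℝ)/2) := by
      intro K hK'
      rw [Set.uIcc_of_le hx'] at hK'
      have hKpos : 0 < K := lt_of_lt_of_le hK hK'.1
      have h1 : K ^ (-(3:ℝ)/2) * K = K ^ (-(1:ℝ)/2) := by
        nth_rewrite 2 [show K = K ^ (1:ℝ) by rw [Real.rpow_one]]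
        rw [← Real.rpow_add hKpos]
        norm_num
      rw [mul_sub, h1]; ring
    rw [intervalIntegral.integral_congr hcongr]
    have hnot : (0:ℝ) ∉ Set.uIcc Khat x := by
      rw [Set.uIcc_of_le hx']
      intro h; exact absurd h.1 (not_le.mpr hK)
    have hi1 : IntervalIntegrable (fun K : ℝ => x * K ^ (-(3:ℝ)/2)) volume Khat x :=
      (intervalIntegral.intervalIntegrable_rpow (Or.inr hnot)).const_mul x
    have hi2 : IntervalIntegrable (fun K : ℝ => K ^ (-(1:ℝ)/2)) volume Khat x :=
      intervalIntegral.intervalIntegrable_rpow (Or.inr hnot)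
    rw [intervalIntegral.integral_sub hi1 hi2, intervalIntegral.integral_const_mul,
      integral_rpow (Or.inr ⟨by norm_num, hnot⟩), integral_rpow (Or.inr ⟨by norm_num, hnot⟩)]
    have e1 : (-(3:ℝ)/2) + 1 = -(1:ℝ)/2 := by norm_num
    have e2 : (-(1:ℝ)/2) + 1 = (1:ℝ)/2 := by norm_num
    rw [e1, e2]
    set a := Real.sqrt Khat with ha
    set b := Real.sqrt x with hb
    have ha0 : 0 < a := Real.sqrt_pos.mpr hK
    have hb0 : 0 < b := Real.sqrt_pos.mpr hx
    have haK : a ^ 2 = Khat := Real.sq_sqrt hK.le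
    have hbx : b ^ 2 = x := Real.sq_sqrt hx.le
    have h1 : Khat ^ ((1:ℝ)/2) = a := by rw [ha, Real.sqrt_eq_rpow]
    have h2 : x ^ ((1:ℝ)/2) = b := by rw [hb, Real.sqrt_eq_rpow]
    have h3 : Khat ^ (-(1:ℝ)/2) = a⁻¹ := by
      rw [show -(1:ℝ)/2 = -(1/2) by ring, Real.rpow_neg hK.le, ← Real.sqrt_eq_rpow, ha]
    have h4 : x ^ (-(1:ℝ)/2) = b⁻¹ := by
      rw [show -(1:ℝ)/2 = -(1/2) by ring, Real.rpow_neg hx.le, ← Real.sqrt_eq_rpow, hb]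
    rw [h1, h2, h3, h4, ← haK, ← hbx]
    field_simp
    ring
end

section
/- For any positive reals x and K̂, (√K̂ − √x)·1_{x ≤ K̂} = (1/2)·K̂^(−1/2)·(K̂ − x)⁺ + (1/4)·∫_0^{K̂} K^(−3/2)·(K − x)⁺ dK. -/
open MeasureTheory Set

/-! Strikes `K ≤ x` contribute nothing to the integral, and on `[x, K̂]` the integrand is
`K ^ (-1/2) - x K ^ (-3/2)`, with antiderivative `2 √K + 2 x / √K`. Adding the boundary term
`(K̂ - x) / (2 √K̂)` leaves `√K̂ - √x`. -/

theorem intervalIntegral_mul_max_sub_eq {f : ℝ → ℝ} {x b : ℝ} (hx : 0 ≤ x) (hxb : x ≤ b) :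
    ∫ K in (0 : ℝ)..b, f K * max (K - x) 0 = ∫ K in x..b, f K * (K - x) := by
  rw [intervalIntegral.integral_of_le (hx.trans hxb), intervalIntegral.integral_of_le hxb,
    setIntegral_eq_of_subset_of_forall_sdiff_eq_zero measurableSet_Ioc
      (Ioc_subset_Ioc_left hx) fun K hK => ?_]
  · exact setIntegral_congr_fun measurableSet_Ioc fun K hK => by
      rw [max_eq_left (sub_nonneg.2 hK.1.le)]
  · have hKx : K ≤ x := not_lt.1 fun h => hK.2 ⟨h, hK.1.2⟩
    rw [max_eq_right (sub_nonpos.2 hKx), mul_zero]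

theorem intervalIntegral_mul_max_sub_eq_zero {f : ℝ → ℝ} {x b : ℝ} (hx : 0 ≤ x) (hbx : b ≤ x) :
    ∫ K in (0 : ℝ)..b, f K * max (K - x) 0 = 0 := by
  refine (intervalIntegral.integral_congr fun K hK => ?_).trans intervalIntegral.integral_zero
  have hKx : K ≤ x := hK.2.trans (max_le hx hbx)
  simp only [max_eq_right (sub_nonpos.2 hKx), mul_zero]

theorem integral_rpow_mul_sub {p x a b : ℝ} (hp₁ : p ≠ -1) (hp₂ : p ≠ -2)
    (h₀ : (0 : ℝ) ∉ uIcc a b) :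
    ∫ K in a..b, K ^ p * (K - x)
      = (b ^ (p + 2) - a ^ (p + 2)) / (p + 2) - x * ((b ^ (p + 1) - a ^ (p + 1)) / (p + 1)) := by
  have hp₂' : p + 1 ≠ -1 := fun h => hp₂ (by linarith)
  have hint (q : ℝ) : IntervalIntegrable (fun K => K ^ q) volume a b :=
    intervalIntegral.intervalIntegrable_rpow (Or.inr h₀)
  have hsplit : ∀ K ∈ uIcc a b, K ^ p * (K - x) = K ^ (p + 1) - x * K ^ p := fun K hK => by
    rw [Real.rpow_add_one (ne_of_mem_of_not_mem hK h₀)]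
    ring
  rw [intervalIntegral.integral_congr hsplit,
    intervalIntegral.integral_sub (hint _) ((hint _).const_mul x),
    intervalIntegral.integral_const_mul, integral_rpow (Or.inr ⟨hp₂', h₀⟩),
    integral_rpow (Or.inr ⟨hp₁, h₀⟩), add_assoc, one_add_one_eq_two]

theorem sqrt_put_static_replication
    (x Khat : ℝ) (hx : 0 < x) (hK : 0 < Khat) :
    (if x ≤ Khat then Real.sqrt Khat - Real.sqrt x else 0)
    = (1 / 2) * Khat ^ (-(1 : ℝ) / 2) * max (Khat - x) 0
      + (1 / 4) * ∫ K in (0 : ℝ)..Khat, K ^ (-(3 : ℝ) / 2) * max (K - x) 0 := by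
  by_cases h : x ≤ Khat
  · have h₀ : (0 : ℝ) ∉ uIcc x Khat := by
      rw [uIcc_of_le h]
      exact fun h0 => hx.not_ge h0.1
    rw [if_pos h, max_eq_left (sub_nonneg.2 h), intervalIntegral_mul_max_sub_eq hx.le h,
      integral_rpow_mul_sub (by norm_num) (by norm_num) h₀]
    norm_num only [Real.rpow_neg hK.le, Real.rpow_neg hx.le, ← Real.sqrt_eq_rpow]
    have hsK := Real.sq_sqrt hK.le
    have hsx := Real.sq_sqrt hx.le
    have hsK_pos : 0 < √Khat := Real.sqrt_pos.2 hK
    have hsx_pos : 0 < √x := Real.sqrt_pos.2 hx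
    field_simp
    linear_combination (4 * √x) * hsK - (4 * √Khat) * hsx
  · rw [if_neg h, max_eq_right (by linarith),
      intervalIntegral_mul_max_sub_eq_zero hx.le (by linarith)]
    ring
end

section
/- Let f : (0,∞) → ℝ be twice continuously differentiable and x, x* > 0. Then f(x) = f(x*) + f'(x*)(x − x*) + ∫_0^{x*} f''(K)(K − x)⁺ dK + ∫_{x*}^{∞} f''(K)(x − K)⁺ dK, provided f''·(K−x)⁺ is integrable on (0, x*) and f''·(x−K)⁺ is integrable on (x*, ∞). -/
/-!
Only the strikes between `x` and `x*` contribute: on that interval the option payoffs are affine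
in `K`, so the two integrals together are the integral form of the first-order Taylor remainder
`∫_{x*}^{x} f''(K) (x - K) dK` of `f` at `x*`.
-/

open MeasureTheory Set

section TaylorRemainder

variable {f f' f'' : ℝ → ℝ} {a b : ℝ}

theorem integral_mul_sub_eq_taylor_remainder
    (hf' : ∀ y ∈ uIcc a b, HasDerivAt f (f' y) y)
    (hf'' : ∀ y ∈ uIcc a b, HasDerivAt f' (f'' y) y)
    (hint : IntervalIntegrable f'' volume a b) (c : ℝ) :
    ∫ K in a..b, f'' K * (c - K) = (f b + f' b * (c - b)) - (f a + f' a * (c - a)) := by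
  -- the two `f'` terms in the derivative of `f K + f' K * (c - K)` cancel
  have hderiv : ∀ y ∈ uIcc a b,
      HasDerivAt (fun K => f K + f' K * (c - K)) (f'' y * (c - y)) y := by
    intro y hy
    exact ((hf' y hy).add ((hf'' y hy).mul ((hasDerivAt_id' y).const_sub c))).congr_deriv
      (by ring)
  exact intervalIntegral.integral_eq_sub_of_hasDerivAt hderiv
    (hint.mul_continuousOn (continuous_const.sub continuous_id).continuousOn)

end TaylorRemainder

section OptionPayoffIntegrals

variable {g : ℝ → ℝ} {a b x : ℝ}

theorem mul_max_sub_zero_eq_indicator_Ioi (g : ℝ → ℝ) (x : ℝ) :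
    (fun K => g K * max (K - x) 0) = (Ioi x).indicator (fun K => g K * (K - x)) := by
  funext K
  by_cases h : x < K
  · rw [indicator_of_mem (mem_Ioi.mpr h), max_eq_left (by linarith)]
  · rw [indicator_of_notMem (notMem_Ioi.mpr (not_lt.mp h)), max_eq_right (by linarith), mul_zero]

theorem mul_max_sub_zero_eq_indicator_Iio (g : ℝ → ℝ) (x : ℝ) :
    (fun K => g K * max (x - K) 0) = (Iio x).indicator (fun K => g K * (x - K)) := by
  funext K
  by_cases h : K < x
  · rw [indicator_of_mem (mem_Iio.mpr h), max_eq_left (by linarith)]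
  · rw [indicator_of_notMem (notMem_Iio.mpr (not_lt.mp h)), max_eq_right (by linarith), mul_zero]

theorem setIntegral_Ioo_mul_max_sub_zero (hax : a ≤ x) (hxb : x ≤ b) :
    ∫ K in Ioo a b, g K * max (K - x) 0 = ∫ K in x..b, g K * (K - x) := by
  rw [mul_max_sub_zero_eq_indicator_Ioi, setIntegral_indicator measurableSet_Ioi,
    Ioo_inter_Ioi, max_eq_right hax, ← integral_Ioc_eq_integral_Ioo,
    ← intervalIntegral.integral_of_le hxb]

theorem setIntegral_Ioo_mul_max_sub_zero_of_le (hbx : b ≤ x) :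
    ∫ K in Ioo a b, g K * max (K - x) 0 = 0 := by
  rw [mul_max_sub_zero_eq_indicator_Ioi, setIntegral_indicator measurableSet_Ioi,
    Ioo_inter_Ioi, Ioo_eq_empty (by simp [hbx]), Measure.restrict_empty, integral_zero_measure]

theorem setIntegral_Ioi_mul_max_sub_zero (hax : a ≤ x) :
    ∫ K in Ioi a, g K * max (x - K) 0 = ∫ K in a..x, g K * (x - K) := by
  rw [mul_max_sub_zero_eq_indicator_Iio, setIntegral_indicator measurableSet_Iio,
    Ioi_inter_Iio, ← integral_Ioc_eq_integral_Ioo, ← intervalIntegral.integral_of_le hax]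

theorem setIntegral_Ioi_mul_max_sub_zero_of_le (hxa : x ≤ a) :
    ∫ K in Ioi a, g K * max (x - K) 0 = 0 := by
  rw [mul_max_sub_zero_eq_indicator_Iio, setIntegral_indicator measurableSet_Iio,
    Ioi_inter_Iio, Ioo_eq_empty (not_lt.mpr hxa), Measure.restrict_empty, integral_zero_measure]

end OptionPayoffIntegrals

theorem carr_madan_representation_general
    (f f' f'' : ℝ → ℝ) (x xs : ℝ) (hx : 0 < x) (hxs : 0 < xs)
    (hf' : ∀ y ∈ Ioi (0 : ℝ), HasDerivAt f (f' y) y)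
    (hf'' : ∀ y ∈ Ioi (0 : ℝ), HasDerivAt f' (f'' y) y)
    (hcont : ContinuousOn f'' (Ioi (0 : ℝ))) :
    f x = f xs + f' xs * (x - xs)
      + (∫ K in Ioo (0 : ℝ) xs, f'' K * max (K - x) 0)
      + ∫ K in Ioi xs, f'' K * max (x - K) 0 := by
  have taylor : ∀ a ∈ Ioi (0 : ℝ), ∀ b ∈ Ioi (0 : ℝ),
      ∫ K in a..b, f'' K * (x - K) = (f b + f' b * (x - b)) - (f a + f' a * (x - a)) := by
    intro a ha b hb
    have hsub : uIcc a b ⊆ Ioi 0 := ordConnected_Ioi.uIcc_subset ha hb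
    exact integral_mul_sub_eq_taylor_remainder (fun y hy => hf' y (hsub hy))
      (fun y hy => hf'' y (hsub hy)) ((hcont.mono hsub).intervalIntegrable) x
  rcases le_total x xs with hle | hle
  · have hcall : ∫ K in x..xs, f'' K * (K - x) = -∫ K in x..xs, f'' K * (x - K) := by
      simp only [← neg_sub x, mul_neg, intervalIntegral.integral_neg]
    rw [setIntegral_Ioo_mul_max_sub_zero hx.le hle, setIntegral_Ioi_mul_max_sub_zero_of_le hle,
      hcall, taylor x hx xs hxs]
    ring
  · rw [setIntegral_Ioo_mul_max_sub_zero_of_le hle, setIntegral_Ioi_mul_max_sub_zero hle,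
      taylor xs hxs x hx]
    ring

theorem carr_madan_representation
    (f f' f'' : ℝ → ℝ) (x xs : ℝ) (hx : 0 < x) (hxs : 0 < xs)
    (hf' : ∀ y ∈ Ioi (0 : ℝ), HasDerivAt f (f' y) y)
    (hf'' : ∀ y ∈ Ioi (0 : ℝ), HasDerivAt f' (f'' y) y)
    (hcont : ContinuousOn f'' (Ioi (0 : ℝ)))
    (hint1 : IntegrableOn (fun K => f'' K * max (K - x) 0) (Ioo 0 xs))
    (hint2 : IntegrableOn (fun K => f'' K * max (x - K) 0) (Ioi xs)) :
    f x = f xs + f' xs * (x - xs)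
      + (∫ K in Ioo (0 : ℝ) xs, f'' K * max (K - x) 0)
      + ∫ K in Ioi xs, f'' K * max (x - K) 0 :=
  carr_madan_representation_general f f' f'' x xs hx hxs hf' hf'' hcont
end

section
/- For reals 0 < ℙ_l ≤ ℙ_u and P_t ≥ 0, the right-side impermanent loss per unit liquidity satisfies 2(√(P_t) − √(ℙ_l))⁺ − 2(√(P_t) − √(ℙ_u))⁺ − (1/√(ℙ_l))(P_t − ℙ_l)⁺ + (1/√(ℙ_u))(P_t − ℙ_u)⁺ = −(1/2)·∫_{ℙ_l}^{ℙ_u} K^(−3/2)·(P_t − K)⁺ dK. -/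
/-!
Put `h(K) = ((√P - √K)⁺)² / √K`. Since `(x⁺)²` is differentiable with derivative `2x⁺`, `h` is
differentiable on `(0, ∞)` with `h'(K) = -½ K^(-3/2) (P - K)⁺`, the factorisation
`(P - K)⁺ = (√P - √K)⁺ ((√P - √K)⁺ + 2√K)` doing the algebra. The same factorisation shows that
`2(√P - √K)⁺ - (P - K)⁺ / √K = -h(K)`, so both sides of the identity equal `h(ℙ_u) - h(ℙ_l)`.
-/

open Asymptotics MeasureTheory

theorem hasDerivAt_max_zero_sq (x : ℝ) :
    HasDerivAt (fun y : ℝ => max y 0 ^ 2) (2 * max x 0) x := by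
  rw [hasDerivAt_iff_isLittleO_nhds_zero]
  refine IsBigO.trans_isLittleO (g := fun h : ℝ => h ^ 2) (.of_bound 1 (.of_forall fun h => ?_))
    (isLittleO_pow_id one_lt_two)
  -- the derivative `2 * max y 0` is `2`-Lipschitz, so the Taylor remainder is at most `h ^ 2`
  have key : |max (x + h) 0 ^ 2 - max x 0 ^ 2 - h * (2 * max x 0)| ≤ h ^ 2 := by
    rw [abs_le]
    constructor <;>
    rcases le_total x 0 with hx | hx <;> rcases le_total (x + h) 0 with hxh | hxh <;>
      simp only [max_eq_left, max_eq_right, hx, hxh] <;> nlinarith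
  simpa [Real.norm_eq_abs, abs_of_nonneg (sq_nonneg h)] using key

theorem Real.rpow_neg_three_halves {K : ℝ} (hK : 0 ≤ K) : K ^ (-(3 : ℝ) / 2) = 1 / (K * √K) := by
  rw [show -(3 : ℝ) / 2 = -(1 + 1 / 2) by norm_num, Real.rpow_neg hK,
    Real.rpow_add' hK (by norm_num), Real.rpow_one, ← Real.sqrt_eq_rpow, one_div]

theorem max_sub_zero_eq_max_sqrt_sub_mul (P : ℝ) {K : ℝ} (hK : 0 ≤ K) :
    max (P - K) 0 = max (√P - √K) 0 * (max (√P - √K) 0 + 2 * √K) := by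
  rcases le_or_gt (√P) (√K) with h | h
  · have hPK : P ≤ K := (Real.sqrt_le_sqrt_iff hK).1 h
    simp [h, hPK]
  · have hP : 0 ≤ P := Real.sqrt_pos.1 ((Real.sqrt_nonneg K).trans_lt h) |>.le
    have hKP : K ≤ P := ((Real.sqrt_lt_sqrt_iff hK).1 h).le
    rw [max_eq_left (sub_nonneg.2 hKP), max_eq_left (sub_nonneg.2 h.le)]
    nlinarith [Real.sq_sqrt hP, Real.sq_sqrt hK]

theorem two_mul_max_sqrt_sub_sub_max_sub_div_sqrt (P : ℝ) {K : ℝ} (hK : 0 < K) :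
    2 * max (√P - √K) 0 - (1 / √K) * max (P - K) 0 = -(max (√P - √K) 0 ^ 2 / √K) := by
  rw [max_sub_zero_eq_max_sqrt_sub_mul P hK.le]
  field_simp [(Real.sqrt_pos.2 hK).ne']
  ring

theorem hasDerivAt_max_sqrt_sub_sq_div_sqrt (P : ℝ) {K : ℝ} (hK : 0 < K) :
    HasDerivAt (fun k => max (√P - √k) 0 ^ 2 / √k)
      (-(1 / 2) * (K ^ (-(3 : ℝ) / 2) * max (P - K) 0)) K := by
  have hsqrt := Real.hasDerivAt_sqrt hK.ne'
  have h := ((hasDerivAt_max_zero_sq _).comp K ((hasDerivAt_const K (√P)).sub hsqrt)).div hsqrt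
    (Real.sqrt_pos.2 hK).ne'
  refine h.congr_deriv ?_
  simp only [Function.comp_apply, Pi.sub_apply]
  rw [Real.rpow_neg_three_halves hK.le, max_sub_zero_eq_max_sqrt_sub_mul P hK.le]
  field_simp
  linear_combination (max (√P - √K) 0 ^ 2 + 2 * √K * max (√P - √K) 0) * Real.sq_sqrt hK.le

theorem integral_rpow_neg_three_halves_mul_max_sub (P : ℝ) {a b : ℝ} (ha : 0 < a) (hab : a ≤ b) :
    ∫ K in a..b, K ^ (-(3 : ℝ) / 2) * max (P - K) 0
      = 2 * (max (√P - √a) 0 ^ 2 / √a - max (√P - √b) 0 ^ 2 / √b) := by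
  have hpos : ∀ K ∈ Set.uIcc a b, 0 < K := fun K hK =>
    ha.trans_le (Set.uIcc_of_le hab ▸ hK).1
  have hint : IntervalIntegrable (fun K : ℝ => K ^ (-(3 : ℝ) / 2) * max (P - K) 0) volume a b :=
    ContinuousOn.intervalIntegrable <|
      (continuousOn_id.rpow_const fun K hK => .inl (hpos K hK).ne').mul (by fun_prop)
  rw [intervalIntegral.integral_eq_sub_of_hasDerivAt (fun K hK =>
    ((hasDerivAt_max_sqrt_sub_sq_div_sqrt P (hpos K hK)).const_mul (-2)).congr_deriv
      (by ring)) hint]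
  ring

theorem UILR_integral_representation_general
    (Pl Pu Pt : ℝ) (hPl : 0 < Pl) (hlu : Pl ≤ Pu) :
    2 * max (Real.sqrt Pt - Real.sqrt Pl) 0
      - 2 * max (Real.sqrt Pt - Real.sqrt Pu) 0
      - (1 / Real.sqrt Pl) * max (Pt - Pl) 0
      + (1 / Real.sqrt Pu) * max (Pt - Pu) 0
    = -(1 / 2) * ∫ K in Pl..Pu, K ^ (-(3 : ℝ) / 2) * max (Pt - K) 0 := by
  rw [integral_rpow_neg_three_halves_mul_max_sub Pt hPl hlu]
  linear_combination two_mul_max_sqrt_sub_sub_max_sub_div_sqrt Pt hPl -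
    two_mul_max_sqrt_sub_sub_max_sub_div_sqrt Pt (hPl.trans_le hlu)

theorem UILR_integral_representation
    (Pl Pu Pt : ℝ) (hPl : 0 < Pl) (hlu : Pl ≤ Pu) (hPt : 0 ≤ Pt) :
    2 * max (Real.sqrt Pt - Real.sqrt Pl) 0
      - 2 * max (Real.sqrt Pt - Real.sqrt Pu) 0
      - (1 / Real.sqrt Pl) * max (Pt - Pl) 0
      + (1 / Real.sqrt Pu) * max (Pt - Pu) 0
    = -(1 / 2) * ∫ K in Pl..Pu, K ^ (-(3 : ℝ) / 2) * max (Pt - K) 0 :=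
  UILR_integral_representation_general Pl Pu Pt hPl hlu
end

section
/- For reals 0 < 𝕊_l ≤ 𝕊_u and P_t ≥ 0, the left-side impermanent loss per unit liquidity satisfies 2(√(𝕊_l) − √(P_t))⁺ − 2(√(𝕊_u) − √(P_t))⁺ − (1/√(𝕊_l))(𝕊_l − P_t)⁺ + (1/√(𝕊_u))(𝕊_u − P_t)⁺ = −(1/2)·∫_{𝕊_l}^{𝕊_u} K^(−3/2)·(K − P_t)⁺ dK. -/
/-!
Put `F(K) = 2 √(max K P) + 2 P / √(max K P)`. Differentiating shows `F' (K) = K^(-3/2) (K - P)⁺`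
away from the strike, so by the fundamental theorem of calculus with one exceptional point the
integral is `F Su - F Sl`. On the other hand, for each endpoint `S`
the two payoffs `2 (√S - √P)⁺ - (S - P)⁺ / √S` equal `F S / 2 - 2 √P`, whichever side of `P` the
point `S` lies on, and the constants cancel in the difference.
-/

open MeasureTheory Set Real

lemma rpow_neg_three_halves {x : ℝ} (hx : 0 < x) : x ^ (-(3 : ℝ) / 2) = (x * √x)⁻¹ := by
  rw [show -(3 : ℝ) / 2 = -(1 + 1 / 2) by norm_num, rpow_neg hx.le, rpow_add hx, rpow_one,
    ← sqrt_eq_rpow]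

lemma hasDerivAt_two_sqrt_add_two_mul_div_sqrt (P : ℝ) {x : ℝ} (hx : 0 < x) :
    HasDerivAt (fun K => 2 * √K + 2 * P / √K) (x ^ (-(3 : ℝ) / 2) * (x - P)) x := by
  have hsqrt := hasDerivAt_sqrt hx.ne'
  refine ((hsqrt.const_mul 2).add
    ((hasDerivAt_const x (2 * P)).div hsqrt (sqrt_pos.mpr hx).ne')).congr_deriv ?_
  rw [rpow_neg_three_halves hx]
  field_simp
  rw [sq_sqrt hx.le]
  ring

noncomputable def putWeightPrimitive (P K : ℝ) : ℝ :=
  2 * √(max K P) + 2 * P / √(max K P)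

lemma continuousOn_putWeightPrimitive (P : ℝ) : ContinuousOn (putWeightPrimitive P) (Ioi 0) := by
  intro x hx
  have : √(max x P) ≠ 0 := (sqrt_pos.mpr (lt_max_of_lt_left hx)).ne'
  unfold putWeightPrimitive
  fun_prop (disch := assumption)

lemma hasDerivAt_putWeightPrimitive {P x : ℝ} (hx : 0 < x) (hxP : x ≠ P) :
    HasDerivAt (putWeightPrimitive P) (x ^ (-(3 : ℝ) / 2) * max (x - P) 0) x := by
  rcases hxP.lt_or_gt with hlt | hgt
  · rw [max_eq_right (by linarith), mul_zero]
    refine (hasDerivAt_const x (putWeightPrimitive P P)).congr_of_eventuallyEq ?_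
    filter_upwards [Iio_mem_nhds hlt] with K (hK : K < P)
    simp [putWeightPrimitive, max_eq_right hK.le]
  · rw [max_eq_left (by linarith)]
    refine (hasDerivAt_two_sqrt_add_two_mul_div_sqrt P hx).congr_of_eventuallyEq ?_
    filter_upwards [Ioi_mem_nhds hgt] with K (hK : P < K)
    simp [putWeightPrimitive, max_eq_left hK.le]

lemma continuousOn_rpow_neg_three_halves_mul_posPart (P : ℝ) :
    ContinuousOn (fun K : ℝ => K ^ (-(3 : ℝ) / 2) * max (K - P) 0) (Ioi 0) := by
  intro x hx
  exact ((continuousAt_rpow_const x _ (Or.inl (ne_of_gt hx))).mul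
    (by fun_prop)).continuousWithinAt

lemma integral_rpow_neg_three_halves_mul_posPart (P : ℝ) {a b : ℝ} (ha : 0 < a) (hb : 0 < b) :
    ∫ K in a..b, K ^ (-(3 : ℝ) / 2) * max (K - P) 0
      = putWeightPrimitive P b - putWeightPrimitive P a := by
  have hpos : uIcc a b ⊆ Ioi 0 := fun x hx => lt_of_lt_of_le (lt_min ha hb) hx.1
  refine integral_eq_of_hasDerivAt_off_countable _ _ (countable_singleton P)
    ((continuousOn_putWeightPrimitive P).mono hpos) (fun x hx => ?_)
    ((continuousOn_rpow_neg_three_halves_mul_posPart P).mono hpos).intervalIntegrable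
  exact hasDerivAt_putWeightPrimitive (lt_trans (lt_min ha hb) hx.1.1) hx.2

lemma payoffs_eq_half_putWeightPrimitive_sub (P S : ℝ) :
    2 * max (√S - √P) 0 - (1 / √S) * max (S - P) 0 = putWeightPrimitive P S / 2 - 2 * √P := by
  rcases le_total S P with hSP | hPS
  · rw [max_eq_right (sub_nonpos.mpr (sqrt_le_sqrt hSP)), max_eq_right (sub_nonpos.mpr hSP),
      putWeightPrimitive, max_eq_right hSP, mul_div_assoc, div_sqrt]
    ring
  · rw [max_eq_left (sub_nonneg.mpr (sqrt_le_sqrt hPS)), max_eq_left (sub_nonneg.mpr hPS),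
      putWeightPrimitive, max_eq_left hPS, one_div_mul_eq_div, sub_div, div_sqrt]
    ring

theorem UILL_integral_representation_general
    (Sl Su Pt : ℝ) (hSl : 0 < Sl) (hlu : Sl ≤ Su) :
    2 * max (Real.sqrt Sl - Real.sqrt Pt) 0
      - 2 * max (Real.sqrt Su - Real.sqrt Pt) 0
      - (1 / Real.sqrt Sl) * max (Sl - Pt) 0
      + (1 / Real.sqrt Su) * max (Su - Pt) 0
    = -(1 / 2) * ∫ K in Sl..Su, K ^ (-(3 : ℝ) / 2) * max (K - Pt) 0 := by
  have hSu : 0 < Su := hSl.trans_le hlu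
  rw [integral_rpow_neg_three_halves_mul_posPart Pt hSl hSu]
  linarith [payoffs_eq_half_putWeightPrimitive_sub Pt Sl,
    payoffs_eq_half_putWeightPrimitive_sub Pt Su]

theorem UILL_integral_representation
    (Sl Su Pt : ℝ) (hSl : 0 < Sl) (hlu : Sl ≤ Su) (hPt : 0 ≤ Pt) :
    2 * max (Real.sqrt Sl - Real.sqrt Pt) 0
      - 2 * max (Real.sqrt Su - Real.sqrt Pt) 0
      - (1 / Real.sqrt Sl) * max (Sl - Pt) 0
      + (1 / Real.sqrt Su) * max (Su - Pt) 0
    = -(1 / 2) * ∫ K in Sl..Su, K ^ (-(3 : ℝ) / 2) * max (K - Pt) 0 :=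
  UILL_integral_representation_general Sl Su Pt hSl hlu
end

section
/- Let μ be a probability measure on (0,∞) (the law of the exit price P_t) such that ∫ x dμ(x) < ∞, and let 0 < ℙ_l ≤ ℙ_u. Then ∫ UIL^R(x) dμ(x) = −(1/2)·∫_{ℙ_l}^{ℙ_u} K^(−3/2)·C(K) dK, where UIL^R(x) = 2(√x − √(ℙ_l))⁺ − 2(√x − √(ℙ_u))⁺ − (1/√(ℙ_l))(x − ℙ_l)⁺ + (1/√(ℙ_u))(x − ℙ_u)⁺ and C(K) = ∫ (x − K)⁺ dμ(x). -/
/-!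
Writing `σ = √x - √K`, one has `(x - K)⁺ = σ⁺ (√x + √K)`, so the static position
`F(K) = 2 (√x - √K)⁺ - (x - K)⁺ / √K` equals `-σ σ⁺ / √K`. Since `s ↦ s s⁺` is `C¹`, so is `F` on
`(0, ∞)`, with `F'(K) = K^(-3/2) (x - K)⁺ / 2`; hence `UIL^R(x) = F(ℙ_l) - F(ℙ_u)` is the integral
of the claim pathwise, and taking expectations commutes with the `dK`-integral by Fubini, the
integrand being dominated by `K^(-3/2) |x|`.
-/

open MeasureTheory Filter Set

lemma hasDerivAt_mul_max_zero (t : ℝ) :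
    HasDerivAt (fun s : ℝ => s * max s 0) (2 * max t 0) t := by
  rcases lt_trichotomy t 0 with ht | rfl | ht
  · rw [max_eq_right ht.le, mul_zero]
    refine (hasDerivAt_const t 0).congr_of_eventuallyEq ?_
    filter_upwards [eventually_lt_nhds ht] with s hs
    rw [max_eq_right hs.le, mul_zero]
  · rw [max_self, mul_zero, hasDerivAt_iff_isLittleO_nhds_zero]
    simp only [zero_add, max_self, mul_zero, sub_zero]
    refine Asymptotics.IsBigO.trans_isLittleO ?_ (Asymptotics.isLittleO_pow_id one_lt_two)
    refine Asymptotics.IsBigO.of_bound' (Eventually.of_forall fun s => ?_)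
    rw [smul_zero, sub_zero, norm_mul, norm_pow, sq]
    gcongr
    rcases le_total s 0 with hs | hs <;> simp [hs]
  · rw [max_eq_left ht.le]
    refine (((hasDerivAt_id' t).fun_mul (hasDerivAt_id' t)).congr_deriv (by ring))
      |>.congr_of_eventuallyEq ?_
    filter_upwards [eventually_gt_nhds ht] with s hs
    rw [max_eq_left hs.le]

lemma max_sub_zero_eq_max_sqrt_sub_zero_mul (x : ℝ) {K : ℝ} (hK : 0 ≤ K) :
    max (x - K) 0 = max (√x - √K) 0 * (√x + √K) := by
  rcases le_or_gt x K with hxK | hKx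
  · rw [max_eq_right (sub_nonpos.2 hxK), max_eq_right (sub_nonpos.2 (Real.sqrt_le_sqrt hxK)),
      zero_mul]
  · rw [max_eq_left (sub_nonneg.2 hKx.le),
      max_eq_left (sub_nonneg.2 (Real.sqrt_le_sqrt hKx.le)), mul_comm, ← sq_sub_sq,
      Real.sq_sqrt (hK.trans hKx.le), Real.sq_sqrt hK]

lemma rpow_neg_three_div_two {K : ℝ} (hK : 0 < K) : K ^ (-(3 : ℝ) / 2) = (K * √K)⁻¹ := by
  rw [show -(3 : ℝ) / 2 = -(1 + 1 / 2) by norm_num, Real.rpow_neg hK.le, Real.rpow_add hK,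
    Real.rpow_one, ← Real.sqrt_eq_rpow]

lemma continuousOn_rpow_neg_three_div_two {a b : ℝ} (ha : 0 < a) (hab : a ≤ b) :
    ContinuousOn (fun K : ℝ => K ^ (-(3 : ℝ) / 2)) (uIcc a b) := fun K hK =>
  (Real.continuousAt_rpow_const K _ (.inl (ha.trans_le (uIcc_of_le hab ▸ hK).1).ne'))
    |>.continuousWithinAt

/-- The position `F` of the header: `UIL^R(x) = uilAntideriv x ℙ_l - uilAntideriv x ℙ_u`. -/
noncomputable def uilAntideriv (x K : ℝ) : ℝ :=
  2 * max (√x - √K) 0 - (1 / √K) * max (x - K) 0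

lemma uilAntideriv_eq (x : ℝ) {K : ℝ} (hK : 0 < K) :
    uilAntideriv x K = -((√x - √K) * max (√x - √K) 0) / √K := by
  have hsK : 0 < √K := Real.sqrt_pos.2 hK
  rw [uilAntideriv, max_sub_zero_eq_max_sqrt_sub_zero_mul x hK.le]
  field_simp
  ring

lemma hasDerivAt_uilAntideriv (x : ℝ) {K : ℝ} (hK : 0 < K) :
    HasDerivAt (uilAntideriv x) (1 / 2 * (K ^ (-(3 : ℝ) / 2) * max (x - K) 0)) K := by
  have hsK : 0 < √K := Real.sqrt_pos.2 hK
  have hσ : HasDerivAt (fun K => √x - √K) (-(1 / (2 * √K))) K := by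
    simpa using (Real.hasDerivAt_sqrt hK.ne').const_sub √x
  have hq : HasDerivAt (fun K => (√x - √K) * max (√x - √K) 0)
      (2 * max (√x - √K) 0 * -(1 / (2 * √K))) K :=
    (hasDerivAt_mul_max_zero _).comp K hσ
  refine ((hq.fun_div (Real.hasDerivAt_sqrt hK.ne') hsK.ne').fun_neg.congr_of_eventuallyEq ?_)
    |>.congr_deriv ?_
  · filter_upwards [eventually_gt_nhds hK] with k hk
    rw [uilAntideriv_eq x hk, neg_div]
  · rw [rpow_neg_three_div_two hK, max_sub_zero_eq_max_sqrt_sub_zero_mul x hK.le]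
    field_simp
    rw [Real.sq_sqrt hK.le]
    ring

lemma integral_rpow_mul_max_sub (x : ℝ) {Pl Pu : ℝ} (hPl : 0 < Pl) (hlu : Pl ≤ Pu) :
    ∫ K in Pl..Pu, K ^ (-(3 : ℝ) / 2) * max (x - K) 0
      = 2 * (uilAntideriv x Pu - uilAntideriv x Pl) := by
  have hint : IntervalIntegrable (fun K : ℝ => K ^ (-(3 : ℝ) / 2) * max (x - K) 0) volume Pl Pu :=
    ((continuousOn_rpow_neg_three_div_two hPl hlu).mul (by fun_prop)).intervalIntegrable
  have hftc := intervalIntegral.integral_eq_sub_of_hasDerivAt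
    (fun K hK => hasDerivAt_uilAntideriv x (hPl.trans_le (uIcc_of_le hlu ▸ hK).1))
    (hint.const_mul (1 / 2))
  rw [intervalIntegral.integral_const_mul] at hftc
  linarith

lemma integrable_uncurry_mul_max_sub {μ : Measure ℝ} (hmom : Integrable (fun x => x) μ)
    {w : ℝ → ℝ} {a b : ℝ} (ha : 0 ≤ a) (hb : 0 ≤ b) (hw : IntervalIntegrable w volume a b) :
    Integrable (Function.uncurry fun K x => w K * max (x - K) 0)
      ((volume.restrict (uIoc a b)).prod μ) := by
  have hw' : Integrable w (volume.restrict (uIoc a b)) := hw.def'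
  have hK : ∀ᵐ K ∂volume.restrict (uIoc a b), 0 ≤ K := by
    filter_upwards [ae_restrict_mem measurableSet_uIoc] with K hK
    exact (le_min ha hb).trans (uIoc_subset_uIcc hK).1
  refine (hw'.norm.mul_prod hmom.norm).mono' ?_ ?_
  · exact (hw'.aestronglyMeasurable.comp_quasiMeasurePreserving
      Measure.quasiMeasurePreserving_fst).mul (Continuous.aestronglyMeasurable (by fun_prop))
  · filter_upwards [Measure.quasiMeasurePreserving_fst.ae hK] with ⟨K, x⟩ hK
    rw [Function.uncurry_apply_pair, norm_mul, Real.norm_of_nonneg (le_max_right _ _)]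
    gcongr
    exact max_le (by linarith [Real.le_norm_self x]) (norm_nonneg x)

lemma integral_intervalIntegral_mul_max_sub {μ : Measure ℝ} [SFinite μ]
    (hmom : Integrable (fun x => x) μ) {w : ℝ → ℝ} {a b : ℝ} (ha : 0 ≤ a) (hb : 0 ≤ b)
    (hw : IntervalIntegrable w volume a b) :
    ∫ x, (∫ K in a..b, w K * max (x - K) 0) ∂μ = ∫ K in a..b, w K * ∫ x, max (x - K) 0 ∂μ := by
  rw [← intervalIntegral_integral_swap (integrable_uncurry_mul_max_sub hmom ha hb hw)]
  simp only [integral_const_mul]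

theorem expected_UILR_static_replication_general
    (μ : Measure ℝ) [IsProbabilityMeasure μ]
    (hmom : Integrable (fun x => x) μ)
    (Pl Pu : ℝ) (hPl : 0 < Pl) (hlu : Pl ≤ Pu) :
    (∫ x, (2 * max (Real.sqrt x - Real.sqrt Pl) 0
        - 2 * max (Real.sqrt x - Real.sqrt Pu) 0
        - (1 / Real.sqrt Pl) * max (x - Pl) 0
        + (1 / Real.sqrt Pu) * max (x - Pu) 0) ∂μ)
    = -(1 / 2) * ∫ K in Pl..Pu, K ^ (-(3 : ℝ) / 2) * (∫ x, max (x - K) 0 ∂μ) := by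
  rw [← integral_intervalIntegral_mul_max_sub hmom hPl.le (hPl.le.trans hlu)
      (continuousOn_rpow_neg_three_div_two hPl hlu).intervalIntegrable, ← integral_const_mul]
  congr 1 with x
  rw [integral_rpow_mul_max_sub x hPl hlu, uilAntideriv, uilAntideriv]
  ring

theorem expected_UILR_static_replication
    (μ : Measure ℝ) [IsProbabilityMeasure μ]
    (hsupp : μ (Set.Iic 0) = 0)
    (hmom : Integrable (fun x => x) μ)
    (Pl Pu : ℝ) (hPl : 0 < Pl) (hlu : Pl ≤ Pu) :
    (∫ x, (2 * max (Real.sqrt x - Real.sqrt Pl) 0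
        - 2 * max (Real.sqrt x - Real.sqrt Pu) 0
        - (1 / Real.sqrt Pl) * max (x - Pl) 0
        + (1 / Real.sqrt Pu) * max (x - Pu) 0) ∂μ)
    = -(1 / 2) * ∫ K in Pl..Pu, K ^ (-(3 : ℝ) / 2) * (∫ x, max (x - K) 0 ∂μ) :=
  expected_UILR_static_replication_general μ hmom Pl Pu hPl hlu
end
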